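/- The only derivation of the algebra A4 is the zero map. -/
import Mathlib


set_option linter.unreachableTactic false
set_option linter.unnecessarySeqFocus false
set_option linter.unusedTactic false

noncomputable section

/-- The underlying space of our 3-dimensional algebras. -/
abbrev V3 : Type := Fin 3 → ℂ
/-- Multiplication of `A4`: unit `e1`, with `e2 * e2 = e2`, `e3 * e3 = -e1 + e2`
and `e2 * e3 = e3 * e2 = 0`. -/
def A4mul : V3 →ₗ[ℂ] V3 →ₗ[ℂ] V3 :=
  LinearMap.mk₂ ℂ
    (fun x y => ![x 0 * y 0 - x 2 * y 2,
                  x 0 * y 1 + x 1 * y 0 + x 1 * y 1 + x 2 * y 2,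
                  x 0 * y 2 + x 2 * y 0])
    (fun x x' y => by funext k; fin_cases k <;> simp <;> ring)
    (fun a x y => by funext k; fin_cases k <;> simp <;> ring)
    (fun x y y' => by funext k; fin_cases k <;> simp <;> ring)
    (fun a x y => by funext k; fin_cases k <;> simp <;> ring)

/-- **Theorem.** The only derivation of the algebra `A4` is the zero map. -/
theorem derivations_of_A4 (d : V3 →ₗ[ℂ] V3)
    (hd : ∀ x y, d (A4mul x y) = A4mul (d x) y + A4mul x (d y)) :
    d = 0 := by
  have H : ∀ (x y : V3) (k : Fin 3), d (A4mul x y) k = A4mul (d x) y k + A4mul x (d y) k := by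
    intro x y k; rw [hd x y]; rfl
  simp only [A4mul, LinearMap.mk₂_apply] at H
  have h10 := H ![1,0,0] ![1,0,0] 0
  have h11 := H ![1,0,0] ![1,0,0] 1
  have h12 := H ![1,0,0] ![1,0,0] 2
  have h20 := H ![0,1,0] ![0,1,0] 0
  have h21 := H ![0,1,0] ![0,1,0] 1
  have h22 := H ![0,1,0] ![0,1,0] 2
  have g1 := H ![0,1,0] ![0,0,1] 1
  have t0 := H ![0,0,1] ![0,0,1] 0
  have t2 := H ![0,0,1] ![0,0,1] 2
  simp at h10 h11 h12 h20 h21 h22 g1 t0 t2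
  have hz : (![0,0,0] : V3) = 0 := by ext k; fin_cases k <;> rfl
  have hs : (![-1,1,0] : V3) = ![0,1,0] - ![1,0,0] := by
    ext k; fin_cases k <;> simp
  rw [hz, map_zero] at g1
  rw [hs, map_sub] at t0 t2
  simp [Pi.sub_apply, h10, h12, h20, h22] at t0 t2
  -- t0 : 0 = -d e3 2 + -d e3 2 should give d e3 2 = 0; t2 : d e3 0 = 0
  simp only [Pi.zero_apply, h22] at g1
  have h21' : d ![0,1,0] 1 = 0 := by rw [h20] at h21; linear_combination -h21
  have d30 : d ![0,0,1] 0 = 0 := by linear_combination -t2/2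
  have d32 : d ![0,0,1] 2 = 0 := by linear_combination t0/2
  have d31 : d ![0,0,1] 1 = 0 := by linear_combination -g1 - d30
  apply LinearMap.ext
  intro x
  have hx : x = x 0 • ![1,0,0] + x 1 • ![0,1,0] + x 2 • ![0,0,1] := by
    ext k; fin_cases k <;> simp
  rw [hx, map_add, map_add, map_smul, map_smul, map_smul]
  ext k
  fin_cases k <;>
    simp [h10, h11, h12, h20, h21', h22, d30, d31, d32]
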